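/- Let N ≥ 1, s > 0, and let ν be a (signed) Radon measure on ℝ^N \ {0} with ∫ min{1,|x|²} d|ν|(x) < ∞ and |ν|(B(x,1)) = O(|x|^{-N-2s}) as |x| → ∞. Then there exists a constant C > 0 such that for all x ∈ ℝ^N with |x| ≥ 2, ∫_{|y|≥1} (1+|x+y|)^{-N-2s} d|ν|(y) ≤ C (1+|x|)^{-N-2s}. -/

import Mathlib

/-!
Split the integral at `‖x + y‖ = ‖x‖ / 2`. Where `‖x + y‖ ≥ ‖x‖ / 2` the integrand is at most
`2 ^ p (1 + ‖x‖) ^ (-p)`, and `|ν|` is finite on `{‖y‖ ≥ 1}`. The remaining `y` lie in the ball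
`B(-x, ‖x‖ / 2)`, far from the origin, where every unit ball has `|ν|`-mass `≲ (1 + ‖x‖) ^ (-p)`.
Averaging the integrand over unit balls and applying Fubini bounds that part by this mass times
`∫ (1 + ‖w‖) ^ (-p) dw`, which is finite because `p = N + 2s > N`. For bounded `x` the integral is
simply at most `|ν| {‖y‖ ≥ 1}`.
-/

open MeasureTheory Metric Module
open scoped ENNReal

lemma Real.rpow_neg_le_mul_rpow_neg_of_div_le {a b c p : ℝ} (ha : 0 < a) (hc : 0 < c) (hp : 0 ≤ p)
    (h : a / c ≤ b) : b ^ (-p) ≤ c ^ p * a ^ (-p) := by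
  calc b ^ (-p) ≤ (a / c) ^ (-p) :=
        Real.rpow_le_rpow_of_nonpos (by positivity) h (neg_nonpos.2 hp)
    _ = c ^ p * a ^ (-p) := by
        rw [Real.div_rpow ha.le hc.le, Real.rpow_neg hc.le, div_inv_eq_mul, mul_comm]

lemma ENNReal.exists_pos_mul_ofReal_le {K : ℝ≥0∞} (hK : K ≠ ⊤) :
    ∃ C > (0 : ℝ), ∀ a, 0 ≤ a → K * ENNReal.ofReal a ≤ ENNReal.ofReal (C * a) := by
  refine ⟨K.toReal + 1, by positivity, fun a ha => ?_⟩
  rw [ENNReal.ofReal_mul (by positivity)]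
  gcongr
  rw [ENNReal.ofReal_add ENNReal.toReal_nonneg zero_le_one, ENNReal.ofReal_toReal hK]
  exact le_self_add

section NormedGroup

variable {E : Type*} [NormedAddCommGroup E] [MeasurableSpace E]

lemma measure_setOf_one_le_norm_le_lintegral [OpensMeasurableSpace E] (ν : Measure E) :
    ν {y | 1 ≤ ‖y‖} ≤ ∫⁻ y, ENNReal.ofReal (min 1 (‖y‖ ^ 2)) ∂ν := by
  have hS : MeasurableSet {y : E | 1 ≤ ‖y‖} := measurableSet_le measurable_const measurable_norm
  calc ν {y | 1 ≤ ‖y‖} = ∫⁻ _ in {y | 1 ≤ ‖y‖}, 1 ∂ν := (setLIntegral_one _).symm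
    _ ≤ ∫⁻ y in {y | 1 ≤ ‖y‖}, ENNReal.ofReal (min 1 (‖y‖ ^ 2)) ∂ν :=
        setLIntegral_mono' hS fun y (hy : 1 ≤ ‖y‖) => by
          rw [min_eq_left (one_le_pow₀ hy), ENNReal.ofReal_one]
    _ ≤ ∫⁻ y, ENNReal.ofReal (min 1 (‖y‖ ^ 2)) ∂ν := setLIntegral_le_lintegral _ _

lemma lintegral_one_add_norm_add_rpow_neg_le_of_norm_le (ν : Measure E) {p R : ℝ} (hp : 0 ≤ p)
    {x : E} (hxR : ‖x‖ ≤ R) :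
    ∫⁻ y, ENNReal.ofReal ((1 + ‖x + y‖) ^ (-p)) ∂ν ≤
      ν Set.univ * ENNReal.ofReal ((1 + R) ^ p) * ENNReal.ofReal ((1 + ‖x‖) ^ (-p)) := by
  have hR : 1 ≤ ENNReal.ofReal ((1 + R) ^ p) * ENNReal.ofReal ((1 + ‖x‖) ^ (-p)) := by
    have hR₀ : 0 < 1 + R := by linarith [norm_nonneg x]
    rw [← ENNReal.ofReal_mul (by positivity), ← ENNReal.ofReal_one]
    refine ENNReal.ofReal_le_ofReal ?_
    simpa using Real.rpow_neg_le_mul_rpow_neg_of_div_le (b := 1) (by positivity) hR₀ hp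
      ((div_le_one hR₀).2 (by linarith))
  calc ∫⁻ y, ENNReal.ofReal ((1 + ‖x + y‖) ^ (-p)) ∂ν ≤ ∫⁻ _, 1 ∂ν :=
        lintegral_mono fun y => ENNReal.ofReal_le_one.2 <|
          Real.rpow_le_one_of_one_le_of_nonpos (by linarith [norm_nonneg (x + y)]) (by linarith)
    _ = ν Set.univ := lintegral_one
    _ ≤ ν Set.univ * ENNReal.ofReal ((1 + R) ^ p) * ENNReal.ofReal ((1 + ‖x‖) ^ (-p)) := by
        rw [mul_assoc]
        exact le_mul_of_one_le_right' hR

lemma setLIntegral_half_le_norm_add_le [OpensMeasurableSpace E] (ν : Measure E) {p : ℝ}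
    (hp : 0 ≤ p) (x : E) :
    ∫⁻ y in {y | ‖x‖ / 2 ≤ ‖x + y‖}, ENNReal.ofReal ((1 + ‖x + y‖) ^ (-p)) ∂ν ≤
      ENNReal.ofReal (2 ^ p) * ν Set.univ * ENNReal.ofReal ((1 + ‖x‖) ^ (-p)) := by
  have hA : MeasurableSet {y : E | ‖x‖ / 2 ≤ ‖x + y‖} :=
    (isClosed_le continuous_const (continuous_const.add continuous_id).norm).measurableSet
  calc ∫⁻ y in {y | ‖x‖ / 2 ≤ ‖x + y‖}, ENNReal.ofReal ((1 + ‖x + y‖) ^ (-p)) ∂ν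
      ≤ ∫⁻ _ in {y | ‖x‖ / 2 ≤ ‖x + y‖}, ENNReal.ofReal (2 ^ p * (1 + ‖x‖) ^ (-p)) ∂ν :=
        setLIntegral_mono' hA fun y (hy : ‖x‖ / 2 ≤ ‖x + y‖) => ENNReal.ofReal_le_ofReal <|
          Real.rpow_neg_le_mul_rpow_neg_of_div_le (by positivity) two_pos hp (by linarith)
    _ ≤ ENNReal.ofReal (2 ^ p * (1 + ‖x‖) ^ (-p)) * ν Set.univ := by
        rw [setLIntegral_const]
        gcongr
        exact Set.subset_univ _
    _ = ENNReal.ofReal (2 ^ p) * ν Set.univ * ENNReal.ofReal ((1 + ‖x‖) ^ (-p)) := by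
        rw [ENNReal.ofReal_mul (by positivity)]
        ring

lemma measure_ball_inter_le_of_le_norm {ν : Measure E} {p C₀ R₀ : ℝ} (hp : 0 ≤ p) (hC₀ : 0 ≤ C₀)
    (hdecay : ∀ x : E, R₀ ≤ ‖x‖ → ν (ball x 1) ≤ ENNReal.ofReal (C₀ * ‖x‖ ^ (-p)))
    {B : Set E} {ρ : ℝ} (hB : ∀ y ∈ B, ρ ≤ ‖y‖) (hρ : 1 < ρ) (hρR₀ : R₀ + 1 ≤ ρ) (w : E) :
    ν (ball w 1 ∩ B) ≤ ENNReal.ofReal (C₀ * (ρ - 1) ^ (-p)) := by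
  rcases (ball w 1 ∩ B).eq_empty_or_nonempty with hempty | ⟨y, hyw, hyB⟩
  · simp [hempty]
  have hw : ρ - 1 ≤ ‖w‖ := by
    linarith [norm_le_norm_add_norm_sub' y w, mem_ball_iff_norm.1 hyw, hB y hyB]
  calc ν (ball w 1 ∩ B) ≤ ν (ball w 1) := measure_mono Set.inter_subset_left
    _ ≤ ENNReal.ofReal (C₀ * ‖w‖ ^ (-p)) := hdecay w (by linarith)
    _ ≤ ENNReal.ofReal (C₀ * (ρ - 1) ^ (-p)) := ENNReal.ofReal_le_ofReal <|
        mul_le_mul_of_nonneg_left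
          (Real.rpow_le_rpow_of_nonpos (by linarith) hw (neg_nonpos.2 hp)) hC₀

end NormedGroup

section FiniteDimensional

variable {E : Type*} [NormedAddCommGroup E] [NormedSpace ℝ E] [FiniteDimensional ℝ E]
  [MeasurableSpace E] [BorelSpace E]

/-- Double counting: `μ (ball 0 r) * f y ≤ ∫_{ball y r} g ∂μ`, and integrating in `y` (Fubini)
weighs each `w` by `ν (ball w r) ≤ δ`. -/
theorem measure_ball_mul_lintegral_le (μ : Measure E) [μ.IsAddHaarMeasure] {ν : Measure E}
    [SFinite ν] {f g : E → ℝ≥0∞} (hf : Measurable f) (hg : Measurable g) {r : ℝ} {δ : ℝ≥0∞}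
    (hfg : ∀ y w, dist w y < r → f y ≤ g w) (hν : ∀ w, ν (ball w r) ≤ δ) :
    μ (ball 0 r) * ∫⁻ y, f y ∂ν ≤ δ * ∫⁻ w, g w ∂μ := by
  have hmeas :
      Measurable (Function.uncurry fun y w : E => (ball y r).indicator (fun _ => f y) w) :=
    (hf.comp measurable_fst).indicator (s := {q : E × E | dist q.2 q.1 < r})
      (measurableSet_lt (measurable_snd.dist measurable_fst) measurable_const)
  calc μ (ball 0 r) * ∫⁻ y, f y ∂ν = ∫⁻ y, ∫⁻ w, (ball y r).indicator (fun _ => f y) w ∂μ ∂ν := by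
        rw [← lintegral_const_mul' _ _ measure_ball_lt_top.ne]
        refine lintegral_congr fun y => ?_
        rw [lintegral_indicator_const measurableSet_ball, Measure.addHaar_ball_center μ y, mul_comm]
    _ = ∫⁻ w, ∫⁻ y, (ball y r).indicator (fun _ => f y) w ∂ν ∂μ :=
        lintegral_lintegral_swap hmeas.aemeasurable
    _ ≤ ∫⁻ w, ∫⁻ y, (ball w r).indicator (fun _ => g w) y ∂ν ∂μ := by
        refine lintegral_mono fun w => lintegral_mono fun y => ?_
        by_cases hwy : dist w y < r
        · rw [Set.indicator_of_mem (show w ∈ ball y r from hwy),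
            Set.indicator_of_mem (mem_ball_comm.1 hwy)]
          exact hfg y w hwy
        · rw [Set.indicator_of_notMem (show w ∉ ball y r from hwy)]
          exact zero_le
    _ ≤ ∫⁻ w, δ * g w ∂μ := by
        refine lintegral_mono fun w => ?_
        rw [lintegral_indicator_const measurableSet_ball, mul_comm]
        gcongr
        exact hν w
    _ = δ * ∫⁻ w, g w ∂μ := lintegral_const_mul _ hg

theorem setLIntegral_norm_add_lt_half_le (μ : Measure E) [μ.IsAddHaarMeasure]
    {ν : Measure E} [SFinite ν] {p C₀ R₀ : ℝ} (hp : 0 ≤ p) (hC₀ : 0 ≤ C₀)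
    (hdecay : ∀ x : E, R₀ ≤ ‖x‖ → ν (ball x 1) ≤ ENNReal.ofReal (C₀ * ‖x‖ ^ (-p)))
    {x : E} (hx : 4 ≤ ‖x‖) (hxR₀ : 2 * R₀ + 2 ≤ ‖x‖) :
    ∫⁻ y in {y | ‖x + y‖ < ‖x‖ / 2}, ENNReal.ofReal ((1 + ‖x + y‖) ^ (-p)) ∂ν ≤
      (μ (ball 0 1))⁻¹ * (ENNReal.ofReal (C₀ * 8 ^ p) * ENNReal.ofReal (2 ^ p) *
        ∫⁻ w, ENNReal.ofReal ((1 + ‖w‖) ^ (-p)) ∂μ) * ENNReal.ofReal ((1 + ‖x‖) ^ (-p)) := by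
  set B := {y : E | ‖x + y‖ < ‖x‖ / 2}
  have hB : ∀ y ∈ B, ‖x‖ / 2 ≤ ‖y‖ := fun y (hy : ‖x + y‖ < ‖x‖ / 2) => by
    linarith [norm_le_add_norm_add x y]
  have hδ : ∀ w, ν.restrict B (ball w 1) ≤
      ENNReal.ofReal (C₀ * 8 ^ p) * ENNReal.ofReal ((1 + ‖x‖) ^ (-p)) := fun w => by
    rw [Measure.restrict_apply measurableSet_ball, ← ENNReal.ofReal_mul (by positivity), mul_assoc]
    refine (measure_ball_inter_le_of_le_norm hp hC₀ hdecay hB (by linarith) (by linarith) w).trans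
      (ENNReal.ofReal_le_ofReal (mul_le_mul_of_nonneg_left ?_ hC₀))
    exact Real.rpow_neg_le_mul_rpow_neg_of_div_le (by positivity) (by norm_num) hp (by linarith)
  have hfg : ∀ y w : E, dist w y < 1 →
      ENNReal.ofReal ((1 + ‖x + y‖) ^ (-p)) ≤ ENNReal.ofReal (2 ^ p * (1 + ‖x + w‖) ^ (-p)) :=
    fun y w hwy => by
      have : ‖x + w‖ ≤ ‖x + y‖ + ‖w - y‖ := by
        simpa using norm_le_norm_add_norm_sub' (x + w) (x + y)
      refine ENNReal.ofReal_le_ofReal (Real.rpow_neg_le_mul_rpow_neg_of_div_le (by positivity)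
        two_pos hp ?_)
      rw [dist_eq_norm] at hwy
      linarith [norm_nonneg (x + y)]
  rw [mul_assoc, ← ENNReal.mul_le_iff_le_inv (measure_ball_pos μ 0 one_pos).ne'
    measure_ball_lt_top.ne]
  calc μ (ball 0 1) * ∫⁻ y in B, ENNReal.ofReal ((1 + ‖x + y‖) ^ (-p)) ∂ν
      ≤ ENNReal.ofReal (C₀ * 8 ^ p) * ENNReal.ofReal ((1 + ‖x‖) ^ (-p)) *
          ∫⁻ w, ENNReal.ofReal (2 ^ p * (1 + ‖x + w‖) ^ (-p)) ∂μ :=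
        measure_ball_mul_lintegral_le μ (by fun_prop) (by fun_prop) hfg hδ
    _ = _ := by
        simp_rw [ENNReal.ofReal_mul (p := 2 ^ p) (by positivity)]
        rw [lintegral_const_mul' _ _ ENNReal.ofReal_ne_top,
          lintegral_add_left_eq_self (fun w => ENNReal.ofReal ((1 + ‖w‖) ^ (-p))) x]
        ring

theorem lintegral_one_add_norm_add_rpow_neg_le_of_le_norm (μ : Measure E) [μ.IsAddHaarMeasure]
    {ν : Measure E} [SFinite ν] {p C₀ R₀ : ℝ} (hp : 0 ≤ p) (hC₀ : 0 ≤ C₀)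
    (hdecay : ∀ x : E, R₀ ≤ ‖x‖ → ν (ball x 1) ≤ ENNReal.ofReal (C₀ * ‖x‖ ^ (-p)))
    {x : E} (hx : 4 ≤ ‖x‖) (hxR₀ : 2 * R₀ + 2 ≤ ‖x‖) :
    ∫⁻ y, ENNReal.ofReal ((1 + ‖x + y‖) ^ (-p)) ∂ν ≤
      (ENNReal.ofReal (2 ^ p) * ν Set.univ + (μ (ball 0 1))⁻¹ *
        (ENNReal.ofReal (C₀ * 8 ^ p) * ENNReal.ofReal (2 ^ p) *
          ∫⁻ w, ENNReal.ofReal ((1 + ‖w‖) ^ (-p)) ∂μ)) * ENNReal.ofReal ((1 + ‖x‖) ^ (-p)) := by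
  have hA : MeasurableSet {y : E | ‖x‖ / 2 ≤ ‖x + y‖} :=
    (isClosed_le continuous_const (continuous_const.add continuous_id).norm).measurableSet
  rw [add_mul, ← lintegral_add_compl _ hA]
  simp_rw [Set.compl_ofPred, not_le]
  exact add_le_add (setLIntegral_half_le_norm_add_le ν hp x)
    (setLIntegral_norm_add_lt_half_le μ hp hC₀ hdecay hx hxR₀)

theorem exists_lintegral_one_add_norm_add_rpow_neg_le {ν : Measure E} [IsFiniteMeasure ν]
    {p C₀ R₀ : ℝ} (hp : (finrank ℝ E : ℝ) < p) (hC₀ : 0 ≤ C₀)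
    (hdecay : ∀ x : E, R₀ ≤ ‖x‖ → ν (ball x 1) ≤ ENNReal.ofReal (C₀ * ‖x‖ ^ (-p))) :
    ∃ C > (0 : ℝ), ∀ x : E, ∫⁻ y, ENNReal.ofReal ((1 + ‖x + y‖) ^ (-p)) ∂ν ≤
      ENNReal.ofReal (C * (1 + ‖x‖) ^ (-p)) := by
  have hp₀ : 0 ≤ p := (Nat.cast_nonneg _).trans hp.le
  let μ : Measure E := Measure.addHaar
  set R := max 4 (2 * R₀ + 2)
  set Knear := ν Set.univ * ENNReal.ofReal ((1 + R) ^ p)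
  set Kfar := ENNReal.ofReal (2 ^ p) * ν Set.univ + (μ (ball 0 1))⁻¹ *
    (ENNReal.ofReal (C₀ * 8 ^ p) * ENNReal.ofReal (2 ^ p) *
      ∫⁻ w, ENNReal.ofReal ((1 + ‖w‖) ^ (-p)) ∂μ)
  have hKfar : Kfar ≠ ⊤ := by
    have := (measure_ball_pos μ 0 one_pos).ne'
    have := (finite_integral_one_add_norm (μ := μ) hp).ne
    finiteness
  obtain ⟨C, hC, hKC⟩ := ENNReal.exists_pos_mul_ofReal_le (K := Knear + Kfar) (by finiteness)
  refine ⟨C, hC, fun x => le_trans ?_ (hKC _ (by positivity))⟩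
  rcases le_total ‖x‖ R with hxR | hxR
  · calc _ ≤ Knear * ENNReal.ofReal ((1 + ‖x‖) ^ (-p)) :=
          lintegral_one_add_norm_add_rpow_neg_le_of_norm_le ν hp₀ hxR
      _ ≤ _ := by gcongr ?_ * _; exact le_self_add
  · calc _ ≤ Kfar * ENNReal.ofReal ((1 + ‖x‖) ^ (-p)) :=
          lintegral_one_add_norm_add_rpow_neg_le_of_le_norm μ hp₀ hC₀ hdecay
            ((le_max_left _ _).trans hxR) ((le_max_right _ _).trans hxR)
      _ ≤ _ := by gcongr ?_ * _; exact le_add_self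

end FiniteDimensional

/-- The total variation `|ν|` of the signed measure `ν = νp - νm` appears as `νp + νm`. -/
theorem stmt1_general (N : ℕ) (s : ℝ) (hs : 0 < s)
    (νp νm : Measure (EuclideanSpace ℝ (Fin N)))
    (hM : ∫⁻ x, ENNReal.ofReal (min 1 (‖x‖ ^ 2)) ∂(νp + νm) < ⊤)
    (C₀ R₀ : ℝ) (hC₀ : 0 < C₀)
    (hdecay : ∀ x : EuclideanSpace ℝ (Fin N), R₀ ≤ ‖x‖ →
      (νp + νm) (ball x 1) ≤ ENNReal.ofReal (C₀ * ‖x‖ ^ (-(N : ℝ) - 2 * s))) :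
    ∃ C > (0 : ℝ), ∀ x : EuclideanSpace ℝ (Fin N), 2 ≤ ‖x‖ →
      ∫⁻ y in {y : EuclideanSpace ℝ (Fin N) | 1 ≤ ‖y‖},
          ENNReal.ofReal ((1 + ‖x + y‖) ^ (-(N : ℝ) - 2 * s)) ∂(νp + νm)
        ≤ ENNReal.ofReal (C * (1 + ‖x‖) ^ (-(N : ℝ) - 2 * s)) := by
  rw [show -(N : ℝ) - 2 * s = -(N + 2 * s) by ring] at hdecay ⊢
  have : IsFiniteMeasure ((νp + νm).restrict {y | 1 ≤ ‖y‖}) :=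
    ⟨by simpa using (measure_setOf_one_le_norm_le_lintegral _).trans_lt hM⟩
  obtain ⟨C, hC, hbound⟩ := exists_lintegral_one_add_norm_add_rpow_neg_le
    (ν := (νp + νm).restrict {y | 1 ≤ ‖y‖}) (by simpa using hs) hC₀.le
    fun x hx => (Measure.restrict_apply_le _ _).trans (hdecay x hx)
  exact ⟨C, hC, fun x _ => hbound x⟩

/-- Decay estimate for the tail integral `∫_{|y|≥1} (1+|x+y|)^{-N-2s} d|ν|(y)`.
The signed Radon measure `ν` is represented through its Jordan decomposition
`ν = νp - νm` (with `νp ⟂ νm`), so that `|ν| = νp + νm`. -/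
theorem stmt1 (N : ℕ) (hN : 1 ≤ N) (s : ℝ) (hs : 0 < s)
    (νp νm : Measure (EuclideanSpace ℝ (Fin N))) (hsing : νp ⟂ₘ νm)
    (hzero : (νp + νm) {0} = 0)
    (hM : ∫⁻ x, ENNReal.ofReal (min 1 (‖x‖ ^ 2)) ∂(νp + νm) < ⊤)
    (C₀ R₀ : ℝ) (hC₀ : 0 < C₀) (hR₀ : 0 < R₀)
    (hdecay : ∀ x : EuclideanSpace ℝ (Fin N), R₀ ≤ ‖x‖ →
      (νp + νm) (ball x 1) ≤ ENNReal.ofReal (C₀ * ‖x‖ ^ (-(N : ℝ) - 2 * s))) :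
    ∃ C > (0 : ℝ), ∀ x : EuclideanSpace ℝ (Fin N), 2 ≤ ‖x‖ →
      ∫⁻ y in {y : EuclideanSpace ℝ (Fin N) | 1 ≤ ‖y‖},
          ENNReal.ofReal ((1 + ‖x + y‖) ^ (-(N : ℝ) - 2 * s)) ∂(νp + νm)
        ≤ ENNReal.ofReal (C * (1 + ‖x‖) ^ (-(N : ℝ) - 2 * s)) :=
  stmt1_general N s hs νp νm hM C₀ R₀ hC₀ hdecay
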